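/- Let G be the time-invariant dynamic Bayesian network DAG of the environment and suppose the joint distribution of the variables is faithful to G. If g_{i,t} ∈ g_t^min, i.e., g_{i,t} has a directed path in G to some future reward node r_{t+k} (k > 0), then there exists k > 0 such that g_{i,t} is NOT conditionally independent of r_{t+k} given g_t^min \ {g_{i,t}} and a_t; consequently removing g_{i,t} from g_t^min changes the conditional distribution of future rewards, so no state in g_t^min can be pruned without loss. -/

import Mathlib

open Relation

/-- Nodes of the time-invariant dynamic Bayesian network: latent state
components `g_{i,t}`, actions `a_t`, and rewards `r_t`. -/
inductive DBNNode (d : ℕ) : Type where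
  | latent (i : Fin d) (t : ℕ)
  | action (t : ℕ)
  | reward (t : ℕ)
deriving DecidableEq

/-- The fixed binary structural masks of the DBN.  `cgg i j = true` encodes the
edge `g_{j,t-1} → g_{i,t}`, `cag i` the edge `a_{t-1} → g_{i,t}`, `cgr i` the
edge `g_{i,t-1} → r_t`, and `car` the edge `a_{t-1} → r_t`. -/
structure DBNMasks (d : ℕ) where
  cgg : Fin d → Fin d → Bool
  cag : Fin d → Bool
  cgr : Fin d → Bool
  car : Bool

/-- The directed edges of the time-invariant DBN graph `G`. -/
def DBNEdge {d : ℕ} (c : DBNMasks d) : DBNNode d → DBNNode d → Prop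
  | .latent j t, .latent i t' => t' = t + 1 ∧ c.cgg i j = true
  | .action t, .latent i t' => t' = t + 1 ∧ c.cag i = true
  | .latent i t, .reward t' => t' = t + 1 ∧ c.cgr i = true
  | .action t, .reward t' => t' = t + 1 ∧ c.car = true
  | _, _ => False

/-- Undirected adjacency induced by a directed edge relation. -/
def Adj {V : Type*} (E : V → V → Prop) (x y : V) : Prop := E x y ∨ E y x

/-- `p` is a (simple, undirected) path in the graph with edge relation `E`:
consecutive nodes are adjacent and no node repeats. -/
def IsPathList {V : Type*} (E : V → V → Prop) (p : List V) : Prop :=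
  p.Chain' (Adj E) ∧ p.Nodup

/-- A path `p` is blocked by the conditioning set `Z`: it contains a
chain `u → m → v` (in either direction) or a fork `u ← m → v` with middle
node `m ∈ Z`, or a collider `u → m ← v` with `m ∉ Z` and no descendant of
`m` in `Z`. -/
def BlockedBy {V : Type*} (E : V → V → Prop) (Z : Set V) (p : List V) : Prop :=
  ∃ u m v : V, [u, m, v] <:+: p ∧
    ((((E u m ∧ E m v) ∨ (E v m ∧ E m u) ∨ (E m u ∧ E m v)) ∧ m ∈ Z) ∨
      ((E u m ∧ E v m) ∧ m ∉ Z ∧ ∀ w : V, Relation.TransGen E m w → w ∉ Z))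

/-- `Z` d-separates `X` from `Y` in the graph with edge relation `E`: every
path between a node of `X` and a node of `Y` is blocked by `Z`. -/
def DSep {V : Type*} (E : V → V → Prop) (X Y Z : Set V) : Prop :=
  ∀ x ∈ X, ∀ y ∈ Y, ∀ p : List V,
    IsPathList E p → p.head? = some x → p.getLast? = some y → BlockedBy E Z p

/-- The joint distribution (represented abstractly by its ternary conditional
independence relation `CI X Y Z`, "X ⫫ Y given Z") satisfies the global Markov
condition w.r.t. the graph: d-separation implies conditional independence. -/
def GlobalMarkov {V : Type*} (E : V → V → Prop)
    (CI : Set V → Set V → Set V → Prop) : Prop :=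
  ∀ X Y Z : Set V, Disjoint X Y → Disjoint X Z → Disjoint Y Z →
    DSep E X Y Z → CI X Y Z

/-- The joint distribution is faithful to the graph: every conditional
independence corresponds to a d-separation. -/
def FaithfulTo {V : Type*} (E : V → V → Prop)
    (CI : Set V → Set V → Set V → Prop) : Prop :=
  ∀ X Y Z : Set V, Disjoint X Y → Disjoint X Z → Disjoint Y Z →
    CI X Y Z → DSep E X Y Z

/-- `g_{i,t} ∈ g_t^min` iff `c_i^{g→r} = 1` or `g_{i,t}` has a directed path in
`G` to a future reward `r_{t+k}` (some `k > 0`) passing through other latent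
state components. -/
def InMinSet {d : ℕ} (c : DBNMasks d) (i : Fin d) (t : ℕ) : Prop :=
  c.cgr i = true ∨
    ∃ k : ℕ, 0 < k ∧ ∃ (j : Fin d) (s : ℕ),
      Relation.TransGen (DBNEdge c) (DBNNode.latent i t) (DBNNode.latent j s) ∧
      Relation.TransGen (DBNEdge c) (DBNNode.latent j s) (DBNNode.reward (t + k))

/-- The minimal latent state set `g_t^min`, as a set of nodes of `G`. -/
def MinSet {d : ℕ} (c : DBNMasks d) (t : ℕ) : Set (DBNNode d) :=
  {n | ∃ i : Fin d, n = DBNNode.latent i t ∧ InMinSet c i t}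


/-! A member `g_{i,t}` of `g_t^min` has a directed path to some reward `r_{t+k}`. Every edge of `G`
advances time by one, so this path is simple, has no colliders, and all its nodes after `g_{i,t}`
lie strictly after time `t`, while the conditioning set `(g_t^min \ {g_{i,t}}) ∪ {a_t}` lives at
time `t`. So the path is unblocked, `g_{i,t}` and `r_{t+k}` are not d-separated, and faithfulness
excludes the conditional independence. -/

section DSeparation

variable {V : Type*} {E : V → V → Prop}

lemma List.mem_of_cons_infix_cons {u m a : V} {l rest : List V}
    (h : u :: m :: rest <:+: a :: l) : m ∈ l := by
  rcases List.infix_cons_iff.mp h with h | h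
  · exact (List.cons_prefix_cons.mp h).2.subset (List.mem_cons_self ..)
  · exact h.subset (by simp)

lemma List.IsChain.pairwise_rank_lt {f : V → ℕ} (hf : ∀ x y, E x y → f x < f y)
    {l : List V} (hl : l.IsChain E) : l.Pairwise (fun x y => f x < f y) :=
  List.isChain_iff_pairwise.mp (hl.imp hf)

lemma not_blockedBy_of_isChain (hasymm : ∀ x y, E x y → ¬ E y x) {Z : Set V} {a : V}
    {l : List V} (hp : (a :: l).IsChain E) (hZ : ∀ m ∈ l, m ∉ Z) :
    ¬ BlockedBy E Z (a :: l) := by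
  rintro ⟨u, m, v, hinf, hcase⟩
  have huvm : [u, m, v].IsChain E := hp.infix hinf
  have hmv : E m v := (List.isChain_cons_cons.mp (List.isChain_cons_cons.mp huvm).2).1
  rcases hcase with ⟨-, hmZ⟩ | ⟨⟨-, hvm⟩, -⟩
  · exact hZ m (List.mem_of_cons_infix_cons hinf) hmZ
  · exact hasymm m v hmv hvm

end DSeparation

def DBNNode.time {d : ℕ} : DBNNode d → ℕ
  | .latent _ t => t
  | .action t => t
  | .reward t => t

section DBN

variable {d : ℕ} {c : DBNMasks d}

lemma DBNEdge.time_lt {x y : DBNNode d} (h : DBNEdge c x y) : x.time < y.time := by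
  cases x <;> cases y <;> first | exact h.elim | simp [DBNNode.time, h.1]

lemma DBNEdge.asymm {x y : DBNNode d} (h : DBNEdge c x y) : ¬ DBNEdge c y x :=
  fun h' => (h.time_lt.trans h'.time_lt).false

lemma time_eq_of_mem_minSet {t : ℕ} {n : DBNNode d} (h : n ∈ MinSet c t) : n.time = t := by
  obtain ⟨i, rfl, -⟩ := h
  rfl

lemma InMinSet.exists_transGen_reward {i : Fin d} {t : ℕ} (h : InMinSet c i t) :
    ∃ k, 0 < k ∧ TransGen (DBNEdge c) (.latent i t) (.reward (t + k)) := by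
  rcases h with h | ⟨k, hk, j, s, h₁, h₂⟩
  · exact ⟨1, one_pos, .single ⟨rfl, h⟩⟩
  · exact ⟨k, hk, h₁.trans h₂⟩

end DBN

/-- Under faithfulness, every member `g_{i,t}` of `g_t^min` is conditionally
dependent on some future reward `r_{t+k}` (`k > 0`) given
`g_t^min \ {g_{i,t}}` and `a_t`; hence no state in `g_t^min` can be pruned. -/
theorem dependence_of_min_state (d : ℕ) (c : DBNMasks d)
    (CI : Set (DBNNode d) → Set (DBNNode d) → Set (DBNNode d) → Prop)
    (hFaithful : FaithfulTo (DBNEdge c) CI) (i : Fin d) (t : ℕ)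
    (hMem : InMinSet c i t) :
    ∃ k : ℕ, 0 < k ∧
      ¬ CI {DBNNode.latent i t} {DBNNode.reward (t + k)}
        ((MinSet c t \ {DBNNode.latent i t}) ∪ {DBNNode.action t}) := by
  obtain ⟨k, hk, hpath⟩ := hMem.exists_transGen_reward
  refine ⟨k, hk, fun hCI => ?_⟩
  have hZ : ∀ n ∈ (MinSet c t \ {DBNNode.latent i t}) ∪ {DBNNode.action t}, n.time = t := by
    rintro n (⟨hn, -⟩ | rfl)
    exacts [time_eq_of_mem_minSet hn, rfl]
  have hsep := hFaithful _ _ _ (by simp) (by simp) (by simp [MinSet]) hCI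
  obtain ⟨l, hchain, hlast⟩ :=
    List.exists_isChain_cons_of_relationReflTransGen hpath.to_reflTransGen
  have htime := hchain.pairwise_rank_lt fun _ _ h => h.time_lt
  refine not_blockedBy_of_isChain (fun _ _ => DBNEdge.asymm) hchain (fun m hm hmZ => ?_)
    (hsep _ rfl _ rfl _ ⟨hchain.imp fun _ _ => Or.inl, ?_⟩ rfl ?_)
  · have hlt : t < m.time := (List.pairwise_cons.mp htime).1 m hm
    exact hlt.ne' (hZ m hmZ)
  · exact (htime.map _ fun _ _ => id).nodup.of_map _
  · rw [List.getLast?_eq_some_getLast (List.cons_ne_nil _ _), hlast]
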